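/- Let d ≤ m be positive integers, H a d×m real matrix with rank d (full row rank), R a symmetric positive definite d×d real matrix, Σ₀ a symmetric positive definite m×m real matrix, μ₀ ∈ ℝ^m, ŷ = Hμ₀, Σ₁ = (Σ₀⁻¹ + Hᵀ R⁻¹ H)⁻¹, K = Σ₁ Hᵀ R⁻¹, and fix y ∈ ℝ^d. Define PIF(y^c) = (1/2)(y − y^c)ᵀ Kᵀ Σ₁⁻¹ K (y − y^c). Then the d×d matrix A = Kᵀ Σ₁⁻¹ K is symmetric positive definite, and there exists λ > 0 such that for all y^c ∈ ℝ^d: PIF(y^c) ≥ (λ/2)·‖y − y^c‖₂². Consequently PIF(y^c) → ∞ as ‖y − y^c‖₂ → ∞. -/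

import Mathlib

open Matrix

/-- The Kalman posterior precision `Σ₁⁻¹ = Σ₀⁻¹ + Hᵀ R⁻¹ H`. -/
noncomputable def kfPrec {d m : ℕ} (H : Matrix (Fin d) (Fin m) ℝ)
    (R : Matrix (Fin d) (Fin d) ℝ) (S0 : Matrix (Fin m) (Fin m) ℝ) :
    Matrix (Fin m) (Fin m) ℝ :=
  S0⁻¹ + Hᵀ * R⁻¹ * H

/-- The Kalman gain `K = Σ₁ Hᵀ R⁻¹`. -/
noncomputable def kfGain {d m : ℕ} (H : Matrix (Fin d) (Fin m) ℝ)
    (R : Matrix (Fin d) (Fin d) ℝ) (S0 : Matrix (Fin m) (Fin m) ℝ) :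
    Matrix (Fin m) (Fin d) ℝ :=
  (kfPrec H R S0)⁻¹ * Hᵀ * R⁻¹

/-- The posterior influence function of the standard Kalman filter,
`PIF(y^c) = (1/2)(y − y^c)ᵀ Kᵀ Σ₁⁻¹ K (y − y^c)`. -/
noncomputable def kfPIF {d m : ℕ} (H : Matrix (Fin d) (Fin m) ℝ)
    (R : Matrix (Fin d) (Fin d) ℝ) (S0 : Matrix (Fin m) (Fin m) ℝ)
    (y yc : Fin d → ℝ) : ℝ :=
  (1 / 2) * ((y - yc) ⬝ᵥ ((kfGain H R S0)ᵀ * kfPrec H R S0 * kfGain H R S0).mulVec (y - yc))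

/-! The gain `K = Σ₁ Hᵀ R⁻¹` is injective, because `Hᵀ` is (`H` has full row rank) and `Σ₁`,
`R⁻¹` are invertible; so `A = Kᵀ Σ₁⁻¹ K` is a congruence of the positive definite precision
`Σ₁⁻¹` by an injective map, hence positive definite. A positive definite matrix dominates
`λ • 1` in the Loewner order for some `λ > 0` (its smallest eigenvalue), which is the bound. -/

open scoped MatrixOrder in
lemma Matrix.PosDef.exists_pos_mul_dotProduct_self_le {n : Type*} [Fintype n]
    {A : Matrix n n ℝ} (hA : A.PosDef) :
    ∃ l > 0, ∀ x : n → ℝ, l * (x ⬝ᵥ x) ≤ x ⬝ᵥ A *ᵥ x := by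
  classical
  cases isEmpty_or_nonempty n
  · exact ⟨1, one_pos, fun x => by simp [Subsingleton.elim x 0]⟩
  obtain ⟨l, hl, hle⟩ := (CFC.exists_pos_algebraMap_le_iff hA.isHermitian.isSelfAdjoint).2
    fun _ => hA.isStrictlyPositive.spectrum_pos
  refine ⟨l, hl, fun x => ?_⟩
  have hx := (le_iff.1 hle).dotProduct_mulVec_nonneg x
  simpa only [star_trivial, Algebra.algebraMap_eq_smul_one, sub_mulVec, smul_mulVec, one_mulVec,
    dotProduct_sub, dotProduct_smul, smul_eq_mul, sub_nonneg] using hx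

lemma Matrix.mulVec_injective_of_rank_eq_card {K m n : Type*} [Field K] [Fintype n]
    {A : Matrix m n K} (hA : A.rank = Fintype.card n) : Function.Injective A.mulVec := by
  rw [mulVec_injective_iff, linearIndependent_iff_card_eq_finrank_span, Set.finrank,
    ← rank_eq_finrank_span_cols, hA]

lemma Matrix.mulVec_mul_injective {R l m n : Type*} [CommSemiring R] [Fintype m] [Fintype n]
    {A : Matrix l m R} {B : Matrix m n R} (hA : Function.Injective A.mulVec)
    (hB : Function.Injective B.mulVec) : Function.Injective (A * B).mulVec := by
  simpa only [Function.comp_def, mulVec_mulVec] using hA.comp hB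

section KalmanFilter

variable {d m : ℕ} {H : Matrix (Fin d) (Fin m) ℝ} {R : Matrix (Fin d) (Fin d) ℝ}
  {S0 : Matrix (Fin m) (Fin m) ℝ}

lemma kfPrec_posDef (hR : R.PosDef) (hS0 : S0.PosDef) : (kfPrec H R S0).PosDef := by
  have hHRH : (Hᵀ * R⁻¹ * H).PosSemidef := by
    simpa only [conjTranspose_eq_transpose_of_trivial] using
      hR.inv.posSemidef.conjTranspose_mul_mul_same H
  exact hS0.inv.add_posSemidef hHRH

lemma kfGain_mulVec_injective (hH : H.rank = d) (hR : R.PosDef) (hS0 : S0.PosDef) :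
    Function.Injective (kfGain H R S0).mulVec := by
  have hHt : Function.Injective Hᵀ.mulVec :=
    mulVec_injective_of_rank_eq_card (by rw [rank_transpose, hH, Fintype.card_fin])
  exact mulVec_mul_injective (mulVec_mul_injective
    (mulVec_injective_of_isUnit (kfPrec_posDef hR hS0).inv.isUnit) hHt)
    (mulVec_injective_of_isUnit hR.inv.isUnit)

end KalmanFilter

theorem kf_pif_lower_bound_general {d m : ℕ}
    (H : Matrix (Fin d) (Fin m) ℝ) (hH : H.rank = d)
    (R : Matrix (Fin d) (Fin d) ℝ) (hR : R.PosDef)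
    (S0 : Matrix (Fin m) (Fin m) ℝ) (hS0 : S0.PosDef)
    (y : Fin d → ℝ) :
    ((kfGain H R S0)ᵀ * kfPrec H R S0 * kfGain H R S0).PosDef ∧
    ∃ l : ℝ, 0 < l ∧ ∀ yc : Fin d → ℝ,
      (l / 2) * ((y - yc) ⬝ᵥ (y - yc)) ≤ kfPIF H R S0 y yc := by
  have hA : ((kfGain H R S0)ᵀ * kfPrec H R S0 * kfGain H R S0).PosDef := by
    simpa only [conjTranspose_eq_transpose_of_trivial] using
      (kfPrec_posDef hR hS0).conjTranspose_mul_mul_same (kfGain_mulVec_injective hH hR hS0)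
  obtain ⟨l, hl, hle⟩ := hA.exists_pos_mul_dotProduct_self_le
  refine ⟨hA, l, hl, fun yc => ?_⟩
  rw [kfPIF]
  linarith [hle (y - yc)]

/-- Quantitative lower bound from Lemma D.1: the matrix `A = Kᵀ Σ₁⁻¹ K` is symmetric
positive definite, and there is a `λ > 0` with
`PIF(y^c) ≥ (λ/2)·‖y − y^c‖₂²` for every contamination `y^c`. -/
theorem kf_pif_lower_bound {d m : ℕ} (hd : 0 < d) (hm : 0 < m) (hdm : d ≤ m)
    (H : Matrix (Fin d) (Fin m) ℝ) (hH : H.rank = d)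
    (R : Matrix (Fin d) (Fin d) ℝ) (hR : R.PosDef)
    (S0 : Matrix (Fin m) (Fin m) ℝ) (hS0 : S0.PosDef)
    (μ₀ : Fin m → ℝ) (y : Fin d → ℝ) :
    ((kfGain H R S0)ᵀ * kfPrec H R S0 * kfGain H R S0).PosDef ∧
    ∃ l : ℝ, 0 < l ∧ ∀ yc : Fin d → ℝ,
      (l / 2) * ((y - yc) ⬝ᵥ (y - yc)) ≤ kfPIF H R S0 y yc :=
  kf_pif_lower_bound_general H hH R hR S0 hS0 y
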